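/- Every equilibrium of a balanced reaction network is a thermodynamic equilibrium: if x̄ ∈ ℝ^m is componentwise positive and f(x̄) = −Z B K Bᵀ Exp(Zᵀ Ln(x̄/x*)) = 0, then Bᵀ Exp(Zᵀ Ln(x̄/x*)) = 0, and hence Sᵀ Ln(x̄) = Sᵀ Ln(x*). -/

import Mathlib

/-!
Write `γ = Zᵀ Ln(x̄/x*)`. Pairing `f(x̄) = 0` with `Ln(x̄/x*)` gives
`0 = γᵀ B K Bᵀ Exp(γ) = ∑ⱼ κⱼ (γ_{h j} - γ_{t j}) (e^{γ_{h j}} - e^{γ_{t j}})`.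
Since `exp` is strictly increasing every summand is nonnegative, and it vanishes only when
`γ_{h j} = γ_{t j}`. Hence `γ` is constant along every reaction, so `Bᵀ Exp(γ) = 0` and
`Sᵀ Ln(x̄) - Sᵀ Ln(x*) = Bᵀ γ = 0`.
-/

open Matrix Real

namespace Matrix

variable {ι ρ R : Type*}

variable (R) in
def incidenceMatrix [DecidableEq ι] [Ring R] (hd tl : ρ → ι) : Matrix ι ρ R :=
  fun i j => if i = hd j then 1 else if i = tl j then -1 else 0

section IncidenceMatrix

variable [Fintype ι] [DecidableEq ι] [Ring R] {hd tl : ρ → ι}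

theorem incidenceMatrix_transpose_mulVec_apply (hht : ∀ j, hd j ≠ tl j) (v : ι → R) (j : ρ) :
    ((incidenceMatrix R hd tl)ᵀ *ᵥ v) j = v (hd j) - v (tl j) := by
  have hterm : ∀ i, (incidenceMatrix R hd tl)ᵀ j i * v i =
      (if i = hd j then v i else 0) - (if i = tl j then v i else 0) := by
    intro i
    simp only [transpose_apply, incidenceMatrix]
    by_cases hh : i = hd j
    · subst hh
      simp [hht j]
    · by_cases ht : i = tl j
      · subst ht
        simp [hh]
      · simp [hh, ht]
  simp only [mulVec, dotProduct, hterm, Finset.sum_sub_distrib, Finset.sum_ite_eq',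
    Finset.mem_univ, if_true]

theorem incidenceMatrix_transpose_mulVec_eq_zero_iff (hht : ∀ j, hd j ≠ tl j) (v : ι → R) :
    (incidenceMatrix R hd tl)ᵀ *ᵥ v = 0 ↔ ∀ j, v (hd j) = v (tl j) := by
  simp only [funext_iff, incidenceMatrix_transpose_mulVec_apply hht, Pi.zero_apply, sub_eq_zero]

end IncidenceMatrix

theorem dotProduct_mul_diagonal_mul_transpose_mulVec [Fintype ι] [Fintype ρ] [DecidableEq ρ]
    [CommRing R] (B : Matrix ι ρ R) (k : ρ → R) (u w : ι → R) :
    u ⬝ᵥ (B * diagonal k * Bᵀ) *ᵥ w = ∑ j, k j * ((Bᵀ *ᵥ u) j * (Bᵀ *ᵥ w) j) := by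
  rw [← mulVec_mulVec, ← mulVec_mulVec, dotProduct_mulVec, ← mulVec_transpose, dotProduct,
    Finset.sum_congr rfl fun j _ => by rw [mulVec_diagonal]]
  exact Finset.sum_congr rfl fun j _ => by ring

end Matrix

section StrictMono

variable {α : Type*} [Ring α] [LinearOrder α] [IsStrictOrderedRing α] {f : α → α}

theorem Monotone.sub_mul_sub_nonneg (hf : Monotone f) (a b : α) :
    0 ≤ (a - b) * (f a - f b) := by
  rcases le_total a b with hab | hab
  · exact mul_nonneg_of_nonpos_of_nonpos (sub_nonpos.2 hab) (sub_nonpos.2 (hf hab))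
  · exact mul_nonneg (sub_nonneg.2 hab) (sub_nonneg.2 (hf hab))

theorem StrictMono.sub_mul_sub_pos (hf : StrictMono f) {a b : α} (hab : a ≠ b) :
    0 < (a - b) * (f a - f b) := by
  rcases hab.lt_or_gt with hab | hab
  · exact mul_pos_of_neg_of_neg (sub_neg.2 hab) (sub_neg.2 (hf hab))
  · exact mul_pos (sub_pos.2 hab) (sub_pos.2 (hf hab))

end StrictMono

theorem eq_of_dotProduct_incidence_laplacian_mulVec_comp_eq_zero {ι ρ : Type*} [Fintype ι]
    [DecidableEq ι] [Fintype ρ] [DecidableEq ρ] {hd tl : ρ → ι} (hht : ∀ j, hd j ≠ tl j)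
    {κ : ρ → ℝ} (hκ : ∀ j, 0 < κ j) {f : ℝ → ℝ} (hf : StrictMono f) {γ : ι → ℝ}
    (h : γ ⬝ᵥ (incidenceMatrix ℝ hd tl * diagonal κ * (incidenceMatrix ℝ hd tl)ᵀ) *ᵥ (f ∘ γ) = 0)
    (j : ρ) : γ (hd j) = γ (tl j) := by
  simp only [dotProduct_mul_diagonal_mul_transpose_mulVec,
    incidenceMatrix_transpose_mulVec_apply hht, Function.comp_apply] at h
  have hterm := (Finset.sum_eq_zero_iff_of_nonneg fun j _ =>
    mul_nonneg (hκ j).le (hf.monotone.sub_mul_sub_nonneg _ _)).1 h j (Finset.mem_univ j)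
  by_contra hne
  exact (mul_pos (hκ j) (hf.sub_mul_sub_pos hne)).ne' hterm

theorem stmt_4_general (m c r : ℕ)
    (hd tl : Fin r → Fin c) (hht : ∀ j, hd j ≠ tl j)
    (B : Matrix (Fin c) (Fin r) ℝ)
    (hB : ∀ i j, B i j = if i = hd j then 1 else if i = tl j then -1 else 0)
    (κ : Fin r → ℝ) (hκ : ∀ j, 0 < κ j)
    (Z : Matrix (Fin m) (Fin c) ℝ)
    (xs : Fin m → ℝ) (hxs : ∀ i, 0 < xs i)
    (xbar : Fin m → ℝ) (hxbar : ∀ i, 0 < xbar i)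
    (heq : -(Z * B * Matrix.diagonal κ * Bᵀ).mulVec
        (fun ρ => Real.exp (Zᵀ.mulVec (fun i => Real.log (xbar i / xs i)) ρ)) = 0) :
    Bᵀ.mulVec (fun ρ => Real.exp (Zᵀ.mulVec (fun i => Real.log (xbar i / xs i)) ρ)) = 0 ∧
      (Z * B)ᵀ.mulVec (fun i => Real.log (xbar i)) =
        (Z * B)ᵀ.mulVec (fun i => Real.log (xs i)) := by
  obtain rfl : B = incidenceMatrix ℝ hd tl := Matrix.ext hB
  set L : Fin m → ℝ := fun i => Real.log (xbar i / xs i)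
  set γ : Fin c → ℝ := Zᵀ *ᵥ L with hγ
  have hpair : γ ⬝ᵥ (incidenceMatrix ℝ hd tl * diagonal κ * (incidenceMatrix ℝ hd tl)ᵀ) *ᵥ
      (exp ∘ γ) = 0 :=
    calc _ = L ⬝ᵥ (Z * incidenceMatrix ℝ hd tl * diagonal κ * (incidenceMatrix ℝ hd tl)ᵀ) *ᵥ
            (exp ∘ γ) := by
          rw [hγ, mulVec_transpose, ← dotProduct_mulVec, mulVec_mulVec, Matrix.mul_assoc,
            Matrix.mul_assoc, Matrix.mul_assoc]
      _ = 0 := by rw [Function.comp_def, neg_eq_zero.1 heq, dotProduct_zero]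
  have hbal := eq_of_dotProduct_incidence_laplacian_mulVec_comp_eq_zero hht hκ exp_strictMono hpair
  have hlog : (fun i => Real.log (xbar i)) = (fun i => Real.log (xs i)) + L := by
    funext i
    simp [L, Real.log_div (hxbar i).ne' (hxs i).ne']
  refine ⟨(incidenceMatrix_transpose_mulVec_eq_zero_iff hht _).2 fun j => by simp [hbal j], ?_⟩
  rw [hlog, mulVec_add, transpose_mul, ← mulVec_mulVec L,
    (incidenceMatrix_transpose_mulVec_eq_zero_iff hht γ).2 hbal, add_zero]

/-- If `x̄ > 0` and `f(x̄) = −Z B K Bᵀ Exp(Zᵀ Ln(x̄/x*)) = 0`, then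
`Bᵀ Exp(Zᵀ Ln(x̄/x*)) = 0` and hence `Sᵀ Ln(x̄) = Sᵀ Ln(x*)`, where `S = Z B`. -/
theorem stmt_4 (m c r : ℕ) (hm : 0 < m) (hc : 0 < c) (hr : 0 < r)
    (hd tl : Fin r → Fin c) (hht : ∀ j, hd j ≠ tl j)
    (B : Matrix (Fin c) (Fin r) ℝ)
    (hB : ∀ i j, B i j = if i = hd j then 1 else if i = tl j then -1 else 0)
    (κ : Fin r → ℝ) (hκ : ∀ j, 0 < κ j)
    (Z : Matrix (Fin m) (Fin c) ℝ)
    (xs : Fin m → ℝ) (hxs : ∀ i, 0 < xs i)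
    (xbar : Fin m → ℝ) (hxbar : ∀ i, 0 < xbar i)
    (heq : -(Z * B * Matrix.diagonal κ * Bᵀ).mulVec
        (fun ρ => Real.exp (Zᵀ.mulVec (fun i => Real.log (xbar i / xs i)) ρ)) = 0) :
    Bᵀ.mulVec (fun ρ => Real.exp (Zᵀ.mulVec (fun i => Real.log (xbar i / xs i)) ρ)) = 0 ∧
      (Z * B)ᵀ.mulVec (fun i => Real.log (xbar i)) =
        (Z * B)ᵀ.mulVec (fun i => Real.log (xs i)) :=
  stmt_4_general m c r hd tl hht B hB κ hκ Z xs hxs xbar hxbar heq
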